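/- Exact invariant of the geometric loop: let p : ℝ≥0∞ with h : p ≤ 1, take state space Σ = ℕ × ℕ (values of the variables x and n), guard G (x, n) := (x = 0), loop body body (x, n) := (PMF.bernoulli p h).map (fun b => (if b then 1 else 0, n + 1)), and post-expectation E (x, n) := (n : ℝ≥0∞). Then the expectation I defined by I (x, n) := if x = 0 then (n : ℝ≥0∞) + 1 / p else (n : ℝ≥0∞) is a fixed point of the characteristic function: Φ_E I = I. Moreover, if 0 < p then I = lfp Φ_E, i.e., I is the weakest pre-expectation of the geometric loop with respect to the post-expectation n. -/

import Mathlib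

open ENNReal

/-- The characteristic function of the loop `while G do body` with respect to
post-expectation `E`. -/
noncomputable def Phi {S : Type*} (G : S → Prop) [DecidablePred G] (body : S → PMF S)
    (E : S → ℝ≥0∞) (X : S → ℝ≥0∞) : S → ℝ≥0∞ :=
  fun σ => if G σ then ∑' τ, body σ τ * X τ else E σ

theorem Phi_monotone {S : Type*} (G : S → Prop) [DecidablePred G] (body : S → PMF S)
    (E : S → ℝ≥0∞) : Monotone (Phi G body E) := by
  intro X Y hXY σ
  simp only [Phi]
  split
  · exact ENNReal.tsum_le_tsum fun τ => mul_le_mul' le_rfl (hXY τ)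
  · exact le_rfl

/-- The characteristic function, bundled as a monotone map on the complete
lattice of expectations. -/
noncomputable def PhiHom {S : Type*} (G : S → Prop) [DecidablePred G] (body : S → PMF S)
    (E : S → ℝ≥0∞) : (S → ℝ≥0∞) →o (S → ℝ≥0∞) :=
  ⟨Phi G body E, Phi_monotone G body E⟩

/-- The stopped `n`-step kernels of the loop `while G do body`. -/
noncomputable def mu {S : Type*} (G : S → Prop) [DecidablePred G] [DecidableEq S]
    (body : S → PMF S) : ℕ → S → S → ℝ≥0∞
  | 0 => fun σ τ => if ¬ G σ ∧ τ = σ then 1 else 0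
  | n + 1 => fun σ =>
      if G σ then (fun τ => ∑' σ', body σ σ' * mu G body n σ' τ) else mu G body 0 σ

/-- The loop's output sub-distribution. -/
noncomputable def W {S : Type*} (G : S → Prop) [DecidablePred G] [DecidableEq S]
    (body : S → PMF S) (σ τ : S) : ℝ≥0∞ :=
  ⨆ n, mu G body n σ τ

/-- Guard of the geometric loop: loop while x = 0. -/
def geoG : ℕ × ℕ → Prop := fun s => s.1 = 0

instance : DecidablePred geoG := fun s => inferInstanceAs (Decidable (s.1 = 0))

/-- Body of the geometric loop: increment n, then flip x with a p-biased coin. -/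
noncomputable def geoBody (p : ℝ≥0∞) (h : p ≤ 1) : ℕ × ℕ → PMF (ℕ × ℕ) :=
  fun s => (PMF.ofFintype (fun b => cond b p (1 - p)) (by simp [h, add_tsub_cancel_of_le h])).map (fun b => (if b then 1 else 0, s.2 + 1))

/-- Post-expectation: the value of n. -/
noncomputable def geoE : ℕ × ℕ → ℝ≥0∞ := fun s => (s.2 : ℝ≥0∞)

/-- Candidate invariant: [x = 0]·(n + 1/p) + [x ≠ 0]·n. -/
noncomputable def geoI (p : ℝ≥0∞) : ℕ × ℕ → ℝ≥0∞ :=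
  fun s => if s.1 = 0 then (s.2 : ℝ≥0∞) + 1 / p else (s.2 : ℝ≥0∞)

/-!
A pre-fixed point `X` of the characteristic function is at least `n` on terminated states, so on
the looping states it satisfies `p * (m + 1) + (1 - p) * X (0, m + 1) ≤ X (0, m)`. Unrolling this
recurrence gives `X (0, m) ≥ ∑ i, (1 - p) ^ i * p * (m + i + 1) = m + 1 / p`, the series being
evaluated through the Cauchy square `∑ (i + 1) q ^ i = (1 - q)⁻², q = 1 - p`. Hence `geoI` lies
below every pre-fixed point, so below the least fixed point, and being a fixed point it equals it.
-/

lemma ENNReal.tsum_add_one_mul_pow (q : ℝ≥0∞) :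
    ∑' n : ℕ, ((n : ℝ≥0∞) + 1) * q ^ n = (1 - q)⁻¹ ^ 2 := by
  simp_rw [sq, ← ENNReal.tsum_geometric, ← ENNReal.tsum_mul_right, ← ENNReal.tsum_mul_left]
  rw [← ENNReal.tsum_prod,
    ← Finset.HasAntidiagonal.sigmaAntidiagonalEquivProd.tsum_eq, ENNReal.tsum_sigma']
  refine tsum_congr fun n => ?_
  rw [tsum_fintype]
  simp only [Finset.HasAntidiagonal.sigmaAntidiagonalEquivProd_apply]
  rw [Finset.sum_coe_sort _ fun kl : ℕ × ℕ => q ^ kl.1 * q ^ kl.2,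
    Finset.sum_congr rfl fun kl hkl => by
      rw [← pow_add, Finset.HasAntidiagonal.mem_antidiagonal.mp hkl]]
  simp

lemma PMF.tsum_map_mul {α β : Type*} (μ : PMF α) (f : α → β) (X : β → ℝ≥0∞) :
    ∑' b, μ.map f b * X b = ∑' a, μ a * X (f a) := by
  classical
  simp only [← PMF.bind_pure_comp, PMF.bind_apply, Function.comp_apply, PMF.pure_apply,
    ← ENNReal.tsum_mul_right]
  rw [ENNReal.tsum_comm]
  refine tsum_congr fun a => ?_
  simp

lemma ENNReal.tsum_pow_mul_le_of_add_mul_le {a f : ℕ → ℝ≥0∞} {c : ℝ≥0∞}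
    (hf : ∀ m, a m + c * f (m + 1) ≤ f m) (m : ℕ) :
    ∑' i, c ^ i * a (m + i) ≤ f m := by
  rw [ENNReal.tsum_eq_iSup_nat]
  refine iSup_le fun k => ?_
  induction k generalizing m with
  | zero => simp
  | succ k ih =>
    calc ∑ i ∈ Finset.range (k + 1), c ^ i * a (m + i)
        = a m + c * ∑ i ∈ Finset.range k, c ^ i * a (m + 1 + i) := by
          rw [Finset.sum_range_succ', Finset.mul_sum, add_comm]
          simp only [pow_succ', mul_assoc, pow_zero, one_mul, add_zero, Nat.add_right_comm m,
            Nat.add_assoc]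
      _ ≤ a m + c * f (m + 1) := by gcongr; exact ih (m + 1)
      _ ≤ f m := hf m

lemma ENNReal.tsum_one_sub_pow_mul_add_one {p : ℝ≥0∞} (hp : p ≠ 0) (h : p ≤ 1) (m : ℕ) :
    ∑' i : ℕ, (1 - p) ^ i * (p * (((m + i : ℕ) : ℝ≥0∞) + 1)) = m + p⁻¹ := by
  have hp_top : p ≠ ∞ := ne_top_of_le_ne_top one_ne_top h
  have hsplit : ∀ i : ℕ, (1 - p) ^ i * (p * (((m + i : ℕ) : ℝ≥0∞) + 1))
      = p * m * (1 - p) ^ i + p * ((i + 1) * (1 - p) ^ i) := by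
    intro i; push_cast; ring
  rw [tsum_congr hsplit, ENNReal.tsum_add, ENNReal.tsum_mul_left, ENNReal.tsum_mul_left,
    ENNReal.tsum_geometric, ENNReal.tsum_add_one_mul_pow, ENNReal.sub_sub_cancel one_ne_top h]
  have hp_inv : p * p⁻¹ = 1 := ENNReal.mul_inv_cancel hp hp_top
  rw [mul_right_comm, hp_inv, one_mul, sq, ← mul_assoc, hp_inv, one_mul]

lemma geoBody_tsum_mul (p : ℝ≥0∞) (h : p ≤ 1) (s : ℕ × ℕ) (X : ℕ × ℕ → ℝ≥0∞) :
    ∑' τ, geoBody p h s τ * X τ = p * X (1, s.2 + 1) + (1 - p) * X (0, s.2 + 1) := by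
  rw [geoBody, PMF.tsum_map_mul, tsum_bool]
  simp [add_comm]

lemma Phi_geo_apply_zero (p : ℝ≥0∞) (h : p ≤ 1) (X : ℕ × ℕ → ℝ≥0∞) (n : ℕ) :
    Phi geoG (geoBody p h) geoE X (0, n) = p * X (1, n + 1) + (1 - p) * X (0, n + 1) := by
  simp [Phi, geoG, geoBody_tsum_mul]

lemma Phi_geo_apply_of_ne_zero (p : ℝ≥0∞) (h : p ≤ 1) (X : ℕ × ℕ → ℝ≥0∞) {x : ℕ} (hx : x ≠ 0)
    (n : ℕ) : Phi geoG (geoBody p h) geoE X (x, n) = n := by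
  simp [Phi, geoG, geoE, hx]

lemma Phi_geoI (p : ℝ≥0∞) (h : p ≤ 1) : Phi geoG (geoBody p h) geoE (geoI p) = geoI p := by
  funext ⟨x, n⟩
  rcases eq_or_ne x 0 with rfl | hx
  · rw [Phi_geo_apply_zero]
    simp only [geoI, if_pos, if_neg one_ne_zero, Nat.cast_succ, one_div]
    rcases eq_or_ne p 0 with rfl | hp
    · simp -- both sides are `∞`
    have hp_top : p ≠ ∞ := ne_top_of_le_ne_top one_ne_top h
    have hp_add : p + (1 - p) = 1 := add_tsub_cancel_of_le h
    calc p * ((n : ℝ≥0∞) + 1) + (1 - p) * ((n + 1) + p⁻¹)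
        = (p + (1 - p)) * (n + 1) + (1 - p) * p⁻¹ := by ring
      _ = n + (p * p⁻¹ + (1 - p) * p⁻¹) := by
          rw [hp_add, ENNReal.mul_inv_cancel hp hp_top]; ring
      _ = n + p⁻¹ := by rw [← add_mul, hp_add, one_mul]
  · simp [Phi_geo_apply_of_ne_zero p h _ hx, geoI, hx]

lemma geoI_le_of_Phi_le {p : ℝ≥0∞} (hp : p ≠ 0) (h : p ≤ 1) {X : ℕ × ℕ → ℝ≥0∞}
    (hX : Phi geoG (geoBody p h) geoE X ≤ X) : geoI p ≤ X := by
  have h_stop : ∀ {x : ℕ} (hx : x ≠ 0) (n : ℕ), (n : ℝ≥0∞) ≤ X (x, n) := fun hx n =>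
    (Phi_geo_apply_of_ne_zero p h X hx n).symm.le.trans (hX _)
  have h_loop : ∀ m : ℕ, p * ((m : ℝ≥0∞) + 1) + (1 - p) * X (0, m + 1) ≤ X (0, m) := fun m =>
    calc p * ((m : ℝ≥0∞) + 1) + (1 - p) * X (0, m + 1)
        ≤ p * X (1, m + 1) + (1 - p) * X (0, m + 1) := by
          gcongr; exact_mod_cast h_stop one_ne_zero (m + 1)
      _ = Phi geoG (geoBody p h) geoE X (0, m) := (Phi_geo_apply_zero p h X m).symm
      _ ≤ X (0, m) := hX _
  rintro ⟨x, n⟩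
  rcases eq_or_ne x 0 with rfl | hx
  · have h_series := ENNReal.tsum_pow_mul_le_of_add_mul_le (f := fun m => X (0, m)) h_loop n
    beta_reduce at h_series
    rw [ENNReal.tsum_one_sub_pow_mul_add_one hp h n] at h_series
    simpa [geoI] using h_series
  · simpa [geoI, hx] using h_stop hx n

/-- the expectation geoI is an exact invariant of the geometric
loop with respect to post-expectation n, and if 0 < p it is the weakest
pre-expectation. -/
theorem geo_invariant (p : ℝ≥0∞) (h : p ≤ 1) :
    Phi geoG (geoBody p h) geoE (geoI p) = geoI p ∧
    (0 < p → geoI p = OrderHom.lfp (PhiHom geoG (geoBody p h) geoE)) := by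
  refine ⟨Phi_geoI p h, fun hp => le_antisymm ?_ ?_⟩
  · exact OrderHom.le_lfp _ fun X hX => geoI_le_of_Phi_le hp.ne' h hX
  · exact OrderHom.lfp_le _ (Phi_geoI p h).le
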